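/- Let x₁ ~ N(0, 1/n), β₁ with β₁/√n → γ > 0, A | x₁ ~ Bernoulli(σ(x₁β₁)), and let w₁ denote a random variable distributed as x₁ given A = 1. Then Var(√n·w₁) = 1 − n·c_n² where c_n = E[w₁], and lim_{n→∞} Var(√n·w₁) = 1 − 4·e_{γ,0}² with e_{γ,0} = E[z·σ(γz)], z ~ N(0,1). -/

import Mathlib

open MeasureTheory ProbabilityTheory Filter

/-- The logistic sigmoid function. -/
noncomputable def sig (t : ℝ) : ℝ := 1 / (1 + Real.exp (-t))

/-- Conditional expectation of `g(x₁)` given `A = 1`, for `x₁ ~ N(0, 1/n)` and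
`A | x₁ ~ Bernoulli(σ(x₁ β₁))`. -/
noncomputable def condExp1 (β₁ : ℝ) (n : ℕ) (g : ℝ → ℝ) : ℝ :=
  (∫ x, g x * sig (x * β₁) ∂(gaussianReal 0 (n : NNReal)⁻¹)) /
  (∫ x, sig (x * β₁) ∂(gaussianReal 0 (n : NNReal)⁻¹))

/-! Since `σ(t) + σ(-t) = 1` and a centred Gaussian is symmetric, the tilt by `σ(x β₁)` halves
the integral of every even function. Hence the normaliser `P(A = 1)` is `1/2` and
`E[n w₁²] = n E[x₁²] = 1`. Rescaling `x₁ = z / √n` gives `√n c_n = 2 E[z σ((β₁/√n) z)]`, which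
tends to `2 e_{γ,0}` by dominated convergence, with `|z σ(t z)| ≤ |z|`. -/

lemma sig_eq_sigmoid : sig = Real.sigmoid := by
  funext t; rw [sig, one_div, Real.sigmoid_def]

lemma sig_add_sig_neg (t : ℝ) : sig t + sig (-t) = 1 := by
  rw [sig_eq_sigmoid, Real.sigmoid_neg]; ring

lemma norm_sig_le_one (t : ℝ) : ‖sig t‖ ≤ 1 := by
  rw [sig_eq_sigmoid, Real.norm_of_nonneg (Real.sigmoid_nonneg t)]
  exact Real.sigmoid_le_one t

@[fun_prop]
lemma continuous_sig : Continuous sig := by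
  rw [sig_eq_sigmoid]; fun_prop

instance isNegInvariant_gaussianReal (v : NNReal) : (gaussianReal 0 v).IsNegInvariant :=
  ⟨by rw [Measure.neg_def]; simpa using gaussianReal_map_neg (μ := 0) (v := v)⟩

lemma integral_sq_gaussianReal (v : NNReal) : ∫ x, x ^ 2 ∂gaussianReal 0 v = v := by
  have h := variance_fun_id_gaussianReal (μ := 0) (v := v)
  simpa [variance_eq_integral measurable_id'.aemeasurable] using h

lemma integrable_mul_sig {μ : Measure ℝ} {f : ℝ → ℝ} (hf : Integrable f μ) (b : ℝ) :
    Integrable (fun x => f x * sig (x * b)) μ :=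
  hf.mul_bdd (by fun_prop) (.of_forall fun x => norm_sig_le_one _)

lemma integral_mul_sig_of_even {μ : Measure ℝ} [μ.IsNegInvariant] {f : ℝ → ℝ}
    (hf : Integrable f μ) (heven : ∀ x, f (-x) = f x) (b : ℝ) :
    ∫ x, f x * sig (x * b) ∂μ = (∫ x, f x ∂μ) / 2 := by
  have hflip : ∫ x, f x * sig (x * -b) ∂μ = ∫ x, f x * sig (x * b) ∂μ := by
    rw [← integral_neg_eq_self (fun x => f x * sig (x * b)) μ]
    simp only [heven, neg_mul, mul_neg]
  have hsum : ∫ x, f x * sig (x * b) ∂μ + ∫ x, f x * sig (x * -b) ∂μ = ∫ x, f x ∂μ := by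
    rw [← integral_add (integrable_mul_sig hf b) (integrable_mul_sig hf (-b))]
    simp only [mul_neg, ← mul_add, sig_add_sig_neg, mul_one]
  linarith

lemma integral_sig_mul_eq_half {μ : Measure ℝ} [μ.IsNegInvariant] [IsProbabilityMeasure μ]
    (b : ℝ) :
    ∫ x, sig (x * b) ∂μ = 1 / 2 := by
  simpa using integral_mul_sig_of_even (integrable_const (1 : ℝ)) (fun _ => rfl) b (μ := μ)

lemma condExp1_natCast_mul_sq (β : ℝ) {n : ℕ} (hn : 0 < n) :
    condExp1 β n (fun x => n * x ^ 2) = 1 := by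
  have hsq : Integrable (fun x => x ^ 2) (gaussianReal 0 (n : NNReal)⁻¹) :=
    (memLp_id_gaussianReal 2).integrable_sq
  rw [condExp1, integral_sig_mul_eq_half,
    integral_mul_sig_of_even (hsq.const_mul _) (fun x => by ring), integral_const_mul,
    integral_sq_gaussianReal]
  push_cast
  field_simp

lemma gaussianReal_inv_natCast_eq_map (n : ℕ) :
    gaussianReal 0 (n : NNReal)⁻¹ = (gaussianReal 0 1).map ((√n)⁻¹ * ·) := by
  rw [gaussianReal_map_const_mul, mul_zero, mul_one]
  congr
  ext
  simp [inv_pow, Real.sq_sqrt (Nat.cast_nonneg n)]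

lemma sqrt_mul_condExp1_id (β : ℝ) {n : ℕ} (hn : 0 < n) :
    √n * condExp1 β n id = 2 * ∫ z, z * sig (β / √n * z) ∂gaussianReal 0 1 := by
  have hsqrt : √(n : ℝ) ≠ 0 := by positivity
  rw [condExp1, integral_sig_mul_eq_half, gaussianReal_inv_natCast_eq_map n,
    integral_map (by fun_prop) (by fun_prop)]
  have hrescale : ∀ z, id ((√n)⁻¹ * z) * sig ((√n)⁻¹ * z * β) =
      (√n)⁻¹ * (z * sig (β / √n * z)) := fun z => by
    simp only [id]; ring_nf
  simp only [hrescale, integral_const_mul]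
  rw [mul_div_assoc', ← mul_assoc, mul_inv_cancel₀ hsqrt]
  ring

lemma continuous_integral_mul_sig {μ : Measure ℝ} (hμ : Integrable id μ) :
    Continuous fun t => ∫ z, z * sig (t * z) ∂μ :=
  continuous_of_dominated (fun t => by fun_prop)
    (fun t => .of_forall fun z => by
      simpa [abs_mul] using mul_le_of_le_one_right (abs_nonneg z) (norm_sig_le_one (t * z)))
    hμ.norm (.of_forall fun z => by fun_prop)

lemma natCast_mul_condExp1_id_sq (β : ℝ) {n : ℕ} (hn : 0 < n) :
    n * condExp1 β n id ^ 2 = 4 * (∫ z, z * sig (β / √n * z) ∂gaussianReal 0 1) ^ 2 := by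
  calc n * condExp1 β n id ^ 2 = (√n * condExp1 β n id) ^ 2 := by
        rw [mul_pow, Real.sq_sqrt (Nat.cast_nonneg n)]
    _ = _ := by rw [sqrt_mul_condExp1_id β hn]; ring

theorem conditional_variance_limit_general (β₁ : ℕ → ℝ) (γ : ℝ)
    (hβ : Tendsto (fun n => β₁ n / Real.sqrt n) atTop (nhds γ)) :
    (∀ n : ℕ, 0 < n →
      condExp1 (β₁ n) n (fun x => (n : ℝ) * x ^ 2)
          - (n : ℝ) * (condExp1 (β₁ n) n id) ^ 2
        = 1 - (n : ℝ) * (condExp1 (β₁ n) n id) ^ 2) ∧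
    Tendsto (fun n =>
        condExp1 (β₁ n) n (fun x => (n : ℝ) * x ^ 2)
          - (n : ℝ) * (condExp1 (β₁ n) n id) ^ 2)
      atTop (nhds (1 - 4 * (∫ z, z * sig (γ * z) ∂(gaussianReal 0 1)) ^ 2)) := by
  refine ⟨fun n hn => by rw [condExp1_natCast_mul_sq _ hn], ?_⟩
  have hcont := continuous_integral_mul_sig
    ((memLp_id_gaussianReal 1 (μ := 0) (v := 1)).integrable le_rfl)
  have hlim : Tendsto (fun n => ∫ z, z * sig (β₁ n / √n * z) ∂gaussianReal 0 1) atTop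
      (nhds (∫ z, z * sig (γ * z) ∂gaussianReal 0 1)) :=
    (hcont.tendsto γ).comp hβ
  refine (tendsto_const_nhds.sub ((hlim.pow 2).const_mul 4)).congr' ?_
  filter_upwards [eventually_gt_atTop 0] with n hn
  rw [condExp1_natCast_mul_sq _ hn, natCast_mul_condExp1_id_sq _ hn]

/-- With `w₁ ~ (x₁ | A = 1)` and `c_n = E[w₁]`: `Var(√n w₁) = 1 - n c_n²`, and
`Var(√n w₁) → 1 - 4 e_{γ,0}²` where `e_{γ,0} = E[z σ(γz)]`, `z ~ N(0,1)`. -/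
theorem conditional_variance_limit (β₁ : ℕ → ℝ) (γ : ℝ) (hγ : 0 < γ)
    (hβ : Tendsto (fun n => β₁ n / Real.sqrt n) atTop (nhds γ)) :
    (∀ n : ℕ, 0 < n →
      condExp1 (β₁ n) n (fun x => (n : ℝ) * x ^ 2)
          - (n : ℝ) * (condExp1 (β₁ n) n id) ^ 2
        = 1 - (n : ℝ) * (condExp1 (β₁ n) n id) ^ 2) ∧
    Tendsto (fun n =>
        condExp1 (β₁ n) n (fun x => (n : ℝ) * x ^ 2)
          - (n : ℝ) * (condExp1 (β₁ n) n id) ^ 2)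
      atTop (nhds (1 - 4 * (∫ z, z * sig (γ * z) ∂(gaussianReal 0 1)) ^ 2)) :=
  conditional_variance_limit_general β₁ γ hβ
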